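/- arXiv:0704.0750 — 5 statements merged into one kernel-verified Lean document; each statement's English description precedes it below -/
import Mathlib

section
/- For n = 3 and every k ≥ 1, the number of meaningful compositions of order k equals the Fibonacci number F_{k+3}, i.e. f(k) = Fib(k+3) (with the convention Fib(0)=0, Fib(1)=1). -/
/-- The relation "to be in composition" on `{1,…,n}`: the composition
`∇_j ∘ ∇_i` is meaningful iff `j = i + 1` or `i + j = n + 1`. -/
def rho (n i j : ℕ) : Prop := j = i + 1 ∨ i + j = n + 1

instance (n i j : ℕ) : Decidable (rho n i j) := by unfold rho; infer_instance

/-- A `k`-tuple `(i₁,…,i_k) ∈ {1,…,n}^k` (encoded as `g : Fin k → Fin n`, where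
`i_t = (g (t-1) : ℕ) + 1`) is a meaningful composition iff every pair of
consecutive entries is related by `rho`. -/
def Meaningful (n k : ℕ) (g : Fin k → Fin n) : Prop :=
  ∀ t : Fin (k - 1),
    rho n (((g ⟨t, lt_of_lt_of_le t.2 (Nat.sub_le k 1)⟩ : Fin n) : ℕ) + 1)
          (((g ⟨(t : ℕ) + 1, Nat.add_lt_of_lt_sub t.2⟩ : Fin n) : ℕ) + 1)

instance (n k : ℕ) (g : Fin k → Fin n) : Decidable (Meaningful n k g) := by
  unfold Meaningful; infer_instance

/-- `numComp n k` is the number of meaningful compositions of order `k` on `ℝⁿ`. -/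
def numComp (n k : ℕ) : ℕ := Fintype.card {g : Fin k → Fin n // Meaningful n k g}

/-! Sort the compositions by their first entry. Since `grad` composes with `curl` and `div`,
`curl` with `curl` and `div`, and `div` only with `grad`, the counts `a_k(i)` of compositions of
order `k + 1` starting with `∇ᵢ` satisfy `a_{k+1}(1) = a_{k+1}(2) = a_k(2) + a_k(3)` and
`a_{k+1}(3) = a_k(1)`, solved by `a_k = (F_{k+2}, F_{k+2}, F_{k+1})`; summing over the first
entry gives `F_{k+2} + F_{k+2} + F_{k+1} = F_{k+4}` compositions of order `k + 1`. -/

open Finset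

def Composable (n : ℕ) (v w : Fin n) : Prop := rho n ((v : ℕ) + 1) ((w : ℕ) + 1)

instance (n : ℕ) : DecidableRel (Composable n) := fun _ _ => by unfold Composable; infer_instance

def numCompFrom (n k : ℕ) (v : Fin n) : ℕ :=
  #{g : Fin (k + 1) → Fin n | Meaningful n (k + 1) g ∧ g 0 = v}

lemma meaningful_cons_iff {n k : ℕ} (v : Fin n) (h : Fin (k + 1) → Fin n) :
    Meaningful n (k + 2) (Fin.cons v h) ↔
      Composable n v (h 0) ∧ Meaningful n (k + 1) h := by
  constructor
  · intro H
    exact ⟨by simpa [Composable] using H ⟨0, by omega⟩, fun t => H ⟨t + 1, by omega⟩⟩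
  · rintro ⟨hv, hh⟩ ⟨t, ht⟩
    cases t with
    | zero => exact hv
    | succ t => exact hh ⟨t, by omega⟩

lemma numCompFrom_zero (n : ℕ) (v : Fin n) : numCompFrom n 0 v = 1 := by
  rw [numCompFrom, card_eq_one]
  refine ⟨fun _ => v, eq_singleton_iff_unique_mem.2 ⟨?_, fun g hg => ?_⟩⟩
  · simp [Meaningful]
  · funext i
    rw [Fin.fin_one_eq_zero i, (mem_filter.1 hg).2.2]

lemma numCompFrom_succ (n k : ℕ) (v : Fin n) :
    numCompFrom n (k + 1) v =
      ∑ w with Composable n v w, numCompFrom n k w := by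
  have tail_cons_bij : numCompFrom n (k + 1) v =
      #{h : Fin (k + 1) → Fin n | Meaningful n (k + 1) h ∧ Composable n v (h 0)} := by
    refine card_nbij' Fin.tail (fun h => Fin.cons v h) ?_ ?_ ?_ ?_
    · intro g hg
      obtain ⟨hM, rfl⟩ := (mem_filter.1 hg).2
      rw [← Fin.cons_self_tail g, meaningful_cons_iff] at hM
      simpa [hM.2] using hM.1
    · intro h hh
      simp only [coe_filter, Set.mem_ofPred_eq, mem_univ, true_and] at hh ⊢
      exact ⟨(meaningful_cons_iff v h).2 hh.symm, rfl⟩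
    · intro g hg
      obtain ⟨-, rfl⟩ := (mem_filter.1 hg).2
      exact Fin.cons_self_tail g
    · intro h _
      exact Fin.tail_cons (α := fun _ => Fin n) v h
  rw [tail_cons_bij, card_eq_sum_card_fiberwise (f := fun h => h 0)
    (t := {w | Composable n v w})]
  · refine sum_congr rfl fun w hw => ?_
    rw [filter_filter, numCompFrom]
    congr 1
    refine filter_congr fun h _ => ⟨fun H => ⟨H.1.1, H.2⟩, fun H => ⟨⟨H.1, ?_⟩, H.2⟩⟩
    simpa [H.2] using hw
  · intro h hh
    simpa using (mem_filter.1 hh).2.2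

lemma numComp_succ (n k : ℕ) : numComp n (k + 1) = ∑ v, numCompFrom n k v := by
  rw [numComp, Fintype.card_subtype, card_eq_sum_card_fiberwise (f := fun g => g 0) (t := univ)
    (fun _ _ => mem_univ _)]
  simp only [filter_filter, numCompFrom]

lemma numCompFrom_three (k : ℕ) :
    numCompFrom 3 k 0 = Nat.fib (k + 2) ∧ numCompFrom 3 k 1 = Nat.fib (k + 2) ∧
      numCompFrom 3 k 2 = Nat.fib (k + 1) := by
  induction k with
  | zero => simp [numCompFrom_zero]
  | succ k ih =>
    obtain ⟨h0, h1, h2⟩ := ih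
    have hfib : Nat.fib (k + 3) = Nat.fib (k + 2) + Nat.fib (k + 1) := by
      rw [Nat.fib_add_two, add_comm]
    simp [numCompFrom_succ, sum_filter, Fin.sum_univ_three, Composable, rho, h0, h1, h2, hfib]

/-- For `n = 3` and every `k ≥ 1`, the number of meaningful compositions of
order `k` of the operations grad, curl, div on `ℝ³` equals the Fibonacci
number `F_{k+3}` (with `F₀ = 0`, `F₁ = 1`). -/
theorem numComp_three_eq_fib (k : ℕ) (hk : 1 ≤ k) :
    numComp 3 k = Nat.fib (k + 3) := by
  obtain ⟨m, rfl⟩ := Nat.exists_eq_add_of_le' hk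
  obtain ⟨h0, h1, h2⟩ := numCompFrom_three m
  rw [numComp_succ, Fin.sum_univ_three, h0, h1, h2, Nat.fib_add_two (n := m + 2),
    Nat.fib_add_two (n := m + 1)]
  ring
end

section
/- For n = 3 one has f(1) = 3, f(2) = 5, and for every k ≥ 1 the recurrence f(k+2) = f(k+1) + f(k) holds. -/
/-!
Count meaningful compositions by their last operation. `curl` and `div` may follow `grad` or
`curl`, while only `grad` may follow `div`. So if `g(m)` is the number of compositions of order
`m` ending in `grad` or `curl`, then `f(m + 1) = 2 g(m) + (f(m) - g(m)) = f(m) + g(m)` and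
`g(m + 1) = f(m)`, whence `f(k + 2) = f(k + 1) + f(k)` for `k ≥ 1`.
-/

open Finset

theorem Meaningful.succ_succ_iff {n k : ℕ} (g : Fin (k + 2) → Fin n) :
    Meaningful n (k + 2) g ↔
      Meaningful n (k + 1) (Fin.init g) ∧
        rho n ((g (Fin.last k).castSucc : ℕ) + 1) ((g (Fin.last (k + 1)) : ℕ) + 1) :=
  Fin.forall_fin_succ'

/-- The number of meaningful compositions of order `k + 1` (not `k`) ending in `∇_(j+1)`. -/
def endCount (n k : ℕ) (j : Fin n) : ℕ :=
  #{g : Fin (k + 1) → Fin n | Meaningful n (k + 1) g ∧ g (Fin.last k) = j}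

section

variable {n : ℕ}

theorem numComp_succ_eq_sum_endCount (k : ℕ) : numComp n (k + 1) = ∑ j, endCount n k j := by
  rw [numComp, Fintype.card_subtype, card_eq_sum_card_fiberwise (f := fun g => g (Fin.last k))
    (t := univ) fun _ _ => mem_coe.2 (mem_univ _)]
  simp only [endCount, filter_filter]

theorem endCount_succ_eq_card_init (k : ℕ) (j : Fin n) :
    endCount n (k + 1) j =
      #{p : Fin (k + 1) → Fin n |
        Meaningful n (k + 1) p ∧ rho n ((p (Fin.last k) : ℕ) + 1) ((j : ℕ) + 1)} := by
  refine card_nbij' Fin.init (fun p => Fin.snoc p j) ?_ ?_ ?_ ?_ <;>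
    simp only [Set.MapsTo, Set.LeftInvOn, coe_filter_univ, Set.mem_ofPred_eq]
  · rintro g ⟨hg, rfl⟩
    exact (Meaningful.succ_succ_iff g).1 hg
  · intro p hp
    refine ⟨(Meaningful.succ_succ_iff _).2 ?_, Fin.snoc_last _ _⟩
    simpa only [Fin.init_snoc, Fin.snoc_castSucc, Fin.snoc_last] using hp
  · rintro g ⟨-, rfl⟩
    exact Fin.snoc_init_self g
  · intro p _
    exact Fin.init_snoc _ _

theorem endCount_succ (k : ℕ) (j : Fin n) :
    endCount n (k + 1) j =
      ∑ i ∈ {i : Fin n | rho n ((i : ℕ) + 1) ((j : ℕ) + 1)}, endCount n k i := by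
  rw [endCount_succ_eq_card_init, card_eq_sum_card_fiberwise (f := fun p => p (Fin.last k))
    (t := {i : Fin n | rho n ((i : ℕ) + 1) ((j : ℕ) + 1)})
    fun p hp => (mem_filter_univ _).2 ((mem_filter_univ p).1 hp).2]
  refine sum_congr rfl fun i hi => ?_
  simp only [endCount, filter_filter]
  refine congrArg card (filter_congr fun p _ => ?_)
  constructor
  · rintro ⟨⟨hm, -⟩, hp⟩
    exact ⟨hm, hp⟩
  · rintro ⟨hm, rfl⟩
    exact ⟨⟨hm, (mem_filter.1 hi).2⟩, rfl⟩

end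

theorem endCount_three_succ_zero (k : ℕ) : endCount 3 (k + 1) 0 = endCount 3 k 2 := by
  simp [endCount_succ, sum_filter, Fin.sum_univ_three, rho]

theorem endCount_three_succ_one (k : ℕ) :
    endCount 3 (k + 1) 1 = endCount 3 k 0 + endCount 3 k 1 := by
  simp [endCount_succ, sum_filter, Fin.sum_univ_three, rho]

theorem endCount_three_succ_two (k : ℕ) :
    endCount 3 (k + 1) 2 = endCount 3 k 0 + endCount 3 k 1 := by
  simp [endCount_succ, sum_filter, Fin.sum_univ_three, rho]

/-- For `n = 3`: `f(1) = 3`, `f(2) = 5`, and the recurrence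
`f(k+2) = f(k+1) + f(k)` holds for every `k ≥ 1`. -/
theorem numComp_three_fib_recurrence :
    numComp 3 1 = 3 ∧ numComp 3 2 = 5 ∧
      ∀ k : ℕ, 1 ≤ k → numComp 3 (k + 2) = numComp 3 (k + 1) + numComp 3 k := by
  refine ⟨by decide, by decide, fun k hk => ?_⟩
  obtain ⟨l, rfl⟩ := Nat.exists_eq_add_of_le' hk
  simp only [show l + 1 + 2 = l + 2 + 1 from rfl, numComp_succ_eq_sum_endCount, Fin.sum_univ_three,
    endCount_three_succ_zero, endCount_three_succ_one, endCount_three_succ_two]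
  omega
end

section
/- For n = 4 and every k ≥ 1, the number of meaningful compositions satisfies the recurrence f(k+2) = 2·f(k). -/
/-!
Sorting the compositions of order `k + 1` by their last entry gives the row vector
`1 ᵥ* A ^ k`, where `A` is the 0/1 matrix of `ρ`; so `f (k + 1)` is the sum of its entries.
For `n = 4` the matrix `A ^ 2` is not `2`, but the all-ones row vector is a left eigenvector
of it with eigenvalue `2`, whence `f (k + 3) = ∑ (1 ᵥ* A ^ 2) ᵥ* A ^ k = 2 f (k + 1)`.
-/

open Matrix

theorem meaningful_snoc_iff {n k : ℕ} (g : Fin (k + 1) → Fin n) (j : Fin n) :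
    Meaningful n (k + 2) (Fin.snoc g j) ↔
      Meaningful n (k + 1) g ∧ rho n ((g (Fin.last k) : ℕ) + 1) ((j : ℕ) + 1) := by
  constructor
  · intro h
    refine ⟨fun t => ?_, ?_⟩
    · have ht : (t : ℕ) < k := by omega
      simpa [Fin.snoc, ht, Nat.lt_succ_of_lt ht] using h ⟨t, by omega⟩
    · simpa [Fin.snoc, Fin.last] using h ⟨k, by omega⟩
  · rintro ⟨hg, hlast⟩ t
    rcases Nat.lt_or_ge (t : ℕ) k with ht | ht
    · simpa [Fin.snoc, ht, Nat.lt_succ_of_lt ht] using hg ⟨t, by omega⟩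
    · have ht : (t : ℕ) = k := by omega
      simpa [Fin.snoc, ht, Fin.last] using hlast

/-- Compositions of order `k + 1`, not `k`, ending at `j`: the shift makes this the `j`-th
entry of `1 ᵥ* rhoMatrix n ^ k`. -/
def numCompEndingAt (n k : ℕ) (j : Fin n) : ℕ :=
  Fintype.card {g : Fin (k + 1) → Fin n // Meaningful n (k + 1) g ∧ g (Fin.last k) = j}

theorem numComp_succ_eq_sum_numCompEndingAt (n k : ℕ) :
    numComp n (k + 1) = ∑ j, numCompEndingAt n k j := by
  simp only [numCompEndingAt, ← Fintype.card_sigma]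
  refine Fintype.card_congr
    { toFun := fun g => ⟨g.1 (Fin.last k), g.1, g.2, rfl⟩
      invFun := fun p => ⟨p.2.1, p.2.2.1⟩
      left_inv := fun _ => rfl
      right_inv := ?_ }
  rintro ⟨j, g, _, rfl⟩
  rfl

theorem numCompEndingAt_zero (n : ℕ) (j : Fin n) : numCompEndingAt n 0 j = 1 := by
  refine Fintype.card_eq_one_iff.mpr ⟨⟨fun _ => j, fun t => t.elim0, rfl⟩, ?_⟩
  rintro ⟨g, -, hg⟩
  exact Subtype.ext <| funext fun i => by rw [Fin.fin_one_eq_zero i]; exact hg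

theorem Fintype.card_subtype_and_apply_eq_sum {α β : Type*} [Fintype α] [Fintype β]
    [DecidableEq β] (P : α → Prop) [DecidablePred P] (R : β → Prop) [DecidablePred R]
    (f : α → β) :
    Fintype.card {x // P x ∧ R (f x)} =
      ∑ b, if R b then Fintype.card {x // P x ∧ f x = b} else 0 := by
  rw [Fintype.card_subtype, Finset.card_eq_sum_card_fiberwise (f := f) (t := Finset.univ)
    (fun _ _ => Finset.mem_univ _)]
  refine Finset.sum_congr rfl fun b _ => ?_
  rw [Fintype.card_subtype, Finset.filter_filter]
  split_ifs with hb
  · congr 1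
    ext x
    simp only [Finset.mem_filter, Finset.mem_univ, true_and]
    constructor
    · rintro ⟨⟨hx, -⟩, rfl⟩; exact ⟨hx, rfl⟩
    · rintro ⟨hx, rfl⟩; exact ⟨⟨hx, hb⟩, rfl⟩
  · exact Finset.card_eq_zero.2 <| Finset.filter_eq_empty_iff.2 fun x _ ⟨⟨_, hx⟩, hxb⟩ =>
      hb (hxb ▸ hx)

theorem numCompEndingAt_succ (n k : ℕ) (j : Fin n) :
    numCompEndingAt n (k + 1) j =
      ∑ i : Fin n, if rho n ((i : ℕ) + 1) ((j : ℕ) + 1) then numCompEndingAt n k i else 0 := by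
  let dropLast : {g : Fin (k + 2) → Fin n // Meaningful n (k + 2) g ∧ g (Fin.last (k + 1)) = j} ≃
      {g : Fin (k + 1) → Fin n //
        Meaningful n (k + 1) g ∧ rho n ((g (Fin.last k) : ℕ) + 1) ((j : ℕ) + 1)} :=
    { toFun := fun g => ⟨Fin.init g.1, by
        obtain ⟨g, hg, rfl⟩ := g
        exact (meaningful_snoc_iff _ _).1 (by rwa [Fin.snoc_init_self])⟩
      invFun := fun g => ⟨Fin.snoc g.1 j, (meaningful_snoc_iff g.1 j).2 g.2, Fin.snoc_last _ _⟩
      left_inv := by rintro ⟨g, -, rfl⟩; exact Subtype.ext (Fin.snoc_init_self g)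
      right_inv := fun g => Subtype.ext (by dsimp only; exact Fin.init_snoc _ _) }
  rw [numCompEndingAt, Fintype.card_congr dropLast,
    Fintype.card_subtype_and_apply_eq_sum _ (fun i : Fin n => rho n ((i : ℕ) + 1) ((j : ℕ) + 1))]
  rfl

def rhoMatrix (n : ℕ) : Matrix (Fin n) (Fin n) ℕ :=
  Matrix.of fun i j => if rho n ((i : ℕ) + 1) ((j : ℕ) + 1) then 1 else 0

theorem numCompEndingAt_eq_one_vecMul_pow (n k : ℕ) :
    numCompEndingAt n k = 1 ᵥ* rhoMatrix n ^ k := by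
  induction k with
  | zero => ext j; simp [numCompEndingAt_zero]
  | succ k ih =>
    ext j
    rw [pow_succ, ← vecMul_vecMul, ← ih, numCompEndingAt_succ]
    simp only [vecMul, dotProduct, rhoMatrix, of_apply, mul_ite, mul_one, mul_zero]

theorem numComp_succ_eq_sum_one_vecMul_pow (n k : ℕ) :
    numComp n (k + 1) = ∑ j, (1 ᵥ* rhoMatrix n ^ k) j := by
  rw [numComp_succ_eq_sum_numCompEndingAt, numCompEndingAt_eq_one_vecMul_pow]

theorem one_vecMul_rhoMatrix_four_sq : (1 : Fin 4 → ℕ) ᵥ* rhoMatrix 4 ^ 2 = 2 • 1 := by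
  decide

/-- For `n = 4` and every `k ≥ 1`, the number of meaningful compositions
satisfies the recurrence f(k+2) = 2·f(k). -/
theorem numComp_four_recurrence (k : ℕ) (hk : 1 ≤ k) :
    (numComp 4 (k + 2) : ℤ) = 2 * numComp 4 k := by
  obtain ⟨m, rfl⟩ := Nat.exists_eq_add_of_le' hk
  have h : numComp 4 (2 + m + 1) = 2 * numComp 4 (m + 1) := by
    rw [numComp_succ_eq_sum_one_vecMul_pow, numComp_succ_eq_sum_one_vecMul_pow, pow_add,
      ← vecMul_vecMul, one_vecMul_rhoMatrix_four_sq, smul_vecMul, Finset.mul_sum]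
    rfl
  rw [show m + 1 + 2 = 2 + m + 1 by ring]
  exact_mod_cast h
end

section
/- For n = 5 and every k ≥ 1, the number of meaningful compositions satisfies the recurrence f(k+3) = f(k+2) + 2·f(k+1) − f(k). -/
lemma meaningful_succ (k : ℕ) (g : Fin (k + 2) → Fin 5) :
    Meaningful 5 (k + 2) g ↔
      Meaningful 5 (k + 1) (fun t => g (Fin.castSucc t)) ∧
        rho 5 ((g ⟨k, by omega⟩ : ℕ) + 1) ((g ⟨k + 1, by omega⟩ : ℕ) + 1) := by
  constructor
  · intro h
    refine ⟨fun t => ?_, h ⟨k, by omega⟩⟩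
    have ht : (t : ℕ) < k + 1 := by omega
    exact h ⟨t, by omega⟩
  · rintro ⟨h1, h2⟩ t
    rcases Nat.lt_or_ge (t : ℕ) k with ht | ht
    · exact h1 ⟨t, by omega⟩
    · have e1 : (⟨(t : ℕ), by omega⟩ : Fin (k + 2)) = ⟨k, by omega⟩ :=
        Fin.ext (by show (t : ℕ) = k; omega)
      have e2 : (⟨(t : ℕ) + 1, by omega⟩ : Fin (k + 2)) = ⟨k + 1, by omega⟩ :=
        Fin.ext (by show (t : ℕ) + 1 = k + 1; omega)
      rw [e1, e2]
      exact h2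

def F (k : ℕ) : Finset (Fin k → Fin 5) := Finset.univ.filter (Meaningful 5 k)

def G (k : ℕ) (i : Fin 5) : Finset (Fin (k + 1) → Fin 5) :=
  Finset.univ.filter (fun g => Meaningful 5 (k + 1) g ∧ g (Fin.last k) = i)

lemma numComp_eq (k : ℕ) : numComp 5 k = (F k).card := by
  simp [numComp, F, Fintype.card_subtype]

lemma lemA (k : ℕ) : (F (k + 1)).card = ∑ i : Fin 5, (G k i).card := by
  rw [Finset.card_eq_sum_card_fiberwise
    (f := fun g : Fin (k + 1) → Fin 5 => g (Fin.last k)) (t := Finset.univ)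
    (fun x _ => Finset.mem_univ _)]
  refine Finset.sum_congr rfl fun i _ => ?_
  congr 1
  simp [F, G, Finset.filter_filter]

lemma lemB (k : ℕ) (j : Fin 5) :
    (G (k + 1) j).card =
      ∑ i : Fin 5, if rho 5 ((i : ℕ) + 1) ((j : ℕ) + 1) then (G k i).card else 0 := by
  rw [Finset.card_eq_sum_card_fiberwise
    (f := fun g : Fin (k + 2) → Fin 5 => g ⟨k, by omega⟩) (t := Finset.univ)
    (fun x _ => Finset.mem_univ _)]
  refine Finset.sum_congr rfl fun i _ => ?_
  by_cases h : rho 5 ((i : ℕ) + 1) ((j : ℕ) + 1)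
  · rw [if_pos h]
    refine Finset.card_bij' (i := fun g _ => fun t => g (Fin.castSucc t))
      (j := fun p _ => Fin.snoc p j) ?_ ?_ ?_ ?_
    · -- membership forward
      intro g hg
      simp only [G, Finset.mem_filter, Finset.mem_univ, true_and] at hg ⊢
      obtain ⟨⟨hm, hlast⟩, hpen'⟩ := hg
      rw [meaningful_succ] at hm
      refine ⟨hm.1, ?_⟩
      exact hpen'
    · -- membership backward
      intro p hp
      simp only [G, Finset.mem_filter, Finset.mem_univ, true_and] at hp ⊢
      obtain ⟨hm, hlast⟩ := hp
      have hk1 : (⟨k, by omega⟩ : Fin (k + 2)) = Fin.castSucc (Fin.last k) := Fin.ext rfl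
      have hk2 : (⟨k + 1, by omega⟩ : Fin (k + 2)) = Fin.last (k + 1) := Fin.ext rfl
      refine ⟨⟨?_, by simp⟩, ?_⟩
      · rw [meaningful_succ]
        constructor
        · simp only [Fin.snoc_castSucc]
          exact hm
        · rw [hk1, hk2, Fin.snoc_castSucc, Fin.snoc_last, hlast]
          exact h
      · rw [hk1, Fin.snoc_castSucc, hlast]
    · -- left inverse
      intro g hg
      simp only [G, Finset.mem_filter, Finset.mem_univ, true_and] at hg
      obtain ⟨⟨hm, hlast⟩, hpen'⟩ := hg
      funext t
      refine Fin.lastCases ?_ (fun s => ?_) t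
      · simp [hlast]
      · simp
    · -- right inverse
      intro p hp
      funext t
      simp
  · rw [if_neg h]
    rw [Finset.card_eq_zero]
    ext g
    simp only [G, Finset.mem_filter, Finset.mem_univ, true_and, Finset.notMem_empty,
      iff_false, not_and]
    rintro ⟨hm, hlast⟩ hpen'
    rw [meaningful_succ] at hm
    apply h
    have hk2 : (⟨k + 1, by omega⟩ : Fin (k + 2)) = Fin.last (k + 1) := Fin.ext rfl
    have := hm.2
    rwa [hpen', hk2, hlast] at this


/-- For `n = 5` and every `k ≥ 1`, the number of meaningful compositions
satisfies the recurrence f(k+3) = f(k+2) + 2·f(k+1) − f(k). -/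
theorem numComp_five_recurrence (k : ℕ) (hk : 1 ≤ k) :
    (numComp 5 (k + 3) : ℤ) = numComp 5 (k + 2) + 2 * numComp 5 (k + 1) - numComp 5 k := by
  obtain ⟨m, rfl⟩ : ∃ m, k = m + 1 := ⟨k - 1, by omega⟩
  have h : numComp 5 (m + 1 + 1 + 1 + 1) + numComp 5 (m + 1)
      = numComp 5 (m + 1 + 1 + 1) + 2 * numComp 5 (m + 1 + 1) := by
    rw [numComp_eq, numComp_eq, numComp_eq, numComp_eq,
        lemA (m + 1 + 1 + 1), lemA (m + 1 + 1), lemA (m + 1), lemA m]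
    simp only [lemB, Fin.sum_univ_five,
      show ((0 : Fin 5) : ℕ) = 0 from rfl, show ((1 : Fin 5) : ℕ) = 1 from rfl,
      show ((2 : Fin 5) : ℕ) = 2 from rfl, show ((3 : Fin 5) : ℕ) = 3 from rfl,
      show ((4 : Fin 5) : ℕ) = 4 from rfl]
    norm_num [rho]
    omega
  have e1 : numComp 5 (m + 1 + 3) = numComp 5 (m + 1 + 1 + 1 + 1) := rfl
  have e2 : numComp 5 (m + 1 + 2) = numComp 5 (m + 1 + 1 + 1) := rfl
  omega
end

section
/- For n = 6 and every k ≥ 1, the number of meaningful compositions satisfies the recurrence f(k+4) = 3·f(k+2) − f(k). -/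
open Matrix

section TupleChain

variable {α : Type*} (r : α → α → Prop)

def IsTupleChain {k : ℕ} (g : Fin (k + 1) → α) : Prop :=
  ∀ t : Fin k, r (g t.castSucc) (g t.succ)

instance [DecidableRel r] {k : ℕ} (g : Fin (k + 1) → α) : Decidable (IsTupleChain r g) := by
  unfold IsTupleChain; infer_instance

theorem isTupleChain_snoc {k : ℕ} (g : Fin (k + 1) → α) (a : α) :
    IsTupleChain r (Fin.snoc g a : Fin (k + 2) → α) ↔ IsTupleChain r g ∧ r (g (Fin.last k)) a := by
  simp [IsTupleChain, Fin.forall_fin_succ', Fin.succ_castSucc, -Fin.castSucc_succ]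

theorem isTupleChain_iff_init {k : ℕ} (g : Fin (k + 2) → α) :
    IsTupleChain r g ↔
      IsTupleChain r (Fin.init g) ∧ r (Fin.init g (Fin.last k)) (g (Fin.last (k + 1))) := by
  conv_lhs => rw [← Fin.snoc_init_self g]
  exact isTupleChain_snoc r _ _

abbrev TupleChainsEndingAt (k : ℕ) (j : α) :=
  {g : {g : Fin (k + 1) → α // IsTupleChain r g} // g.1 (Fin.last k) = j}

def tupleChainsEndingAtSuccEquiv (k : ℕ) (j : α) :
    TupleChainsEndingAt r (k + 1) j ≃ Σ i : {i // r i j}, TupleChainsEndingAt r k i where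
  toFun g :=
    ⟨⟨Fin.init g.1.1 (Fin.last k), by
      simpa [g.2] using ((isTupleChain_iff_init r _).1 g.1.2).2⟩,
      ⟨⟨Fin.init g.1.1, ((isTupleChain_iff_init r _).1 g.1.2).1⟩, rfl⟩⟩
  invFun g :=
    ⟨⟨Fin.snoc g.2.1.1 j, (isTupleChain_snoc r _ _).2 ⟨g.2.1.2, by rw [g.2.2]; exact g.1.2⟩⟩,
      Fin.snoc_last (α := fun _ ↦ α) _ _⟩
  left_inv := by
    rintro ⟨⟨g, hg⟩, rfl⟩
    simp
  right_inv := by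
    rintro ⟨⟨i, hij⟩, ⟨⟨g, hg⟩, hi⟩⟩
    dsimp only at hi
    subst hi
    simp only [Fin.init_snoc, Sigma.mk.injEq, true_and]
    exact (Subtype.heq_iff_coe_eq (by simp)).2 rfl

variable [Fintype α] [DecidableEq α] [DecidableRel r]

def relMatrix : Matrix α α ℕ := Matrix.of fun i j ↦ if r i j then 1 else 0

theorem card_tupleChainsEndingAt (k : ℕ) (j : α) :
    Fintype.card (TupleChainsEndingAt r k j) = (1 ᵥ* relMatrix r ^ k) j := by
  induction k generalizing j with
  | zero =>
    rw [pow_zero, vecMul_one, Pi.one_apply, Fintype.card_eq_one_iff]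
    refine ⟨⟨⟨fun _ ↦ j, Fin.elim0⟩, rfl⟩, ?_⟩
    rintro ⟨⟨g, _⟩, rfl⟩
    ext x
    exact congrArg g (Subsingleton.elim (α := Fin 1) _ _)
  | succ k ih =>
    rw [Fintype.card_congr (tupleChainsEndingAtSuccEquiv r k j), Fintype.card_sigma, pow_succ,
      ← vecMul_vecMul]
    simp only [ih]
    rw [← Finset.sum_subtype {i | r i j} (fun _ ↦ by simp), Finset.sum_filter]
    simp [vecMul, dotProduct, relMatrix]

theorem card_isTupleChain (k : ℕ) :
    Fintype.card {g : Fin (k + 1) → α // IsTupleChain r g} = 1 ⬝ᵥ (relMatrix r ^ k *ᵥ 1) := by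
  rw [Fintype.card_congr
      (Equiv.sigmaFiberEquiv fun g : {g // IsTupleChain r g} ↦ g.1 (Fin.last k)).symm,
    Fintype.card_sigma, dotProduct_mulVec]
  simp [card_tupleChainsEndingAt, dotProduct]

end TupleChain

theorem dotProduct_pow_mulVec_recurrence {R ι : Type*} [CommSemiring R] [Fintype ι] [DecidableEq ι]
    {A : Matrix ι ι R} {v : ι → R} {c : R} (hv : A ^ 4 *ᵥ v + v = c • (A ^ 2 *ᵥ v))
    (u : ι → R) (k : ℕ) :
    u ⬝ᵥ (A ^ (k + 4) *ᵥ v) + u ⬝ᵥ (A ^ k *ᵥ v) = c * u ⬝ᵥ (A ^ (k + 2) *ᵥ v) := by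
  rw [pow_add, pow_add, ← mulVec_mulVec, ← mulVec_mulVec, ← dotProduct_add, ← mulVec_add, hv,
    mulVec_smul, dotProduct_smul, smul_eq_mul]

def compMatrix (n : ℕ) : Matrix (Fin n) (Fin n) ℕ :=
  relMatrix fun i j : Fin n ↦ rho n (i + 1) (j + 1)

-- `k + 1 - 1` reduces to `k`, so `Meaningful n (k + 1)` unfolds to `IsTupleChain` on the nose.
theorem numComp_succ_s8 (n k : ℕ) : numComp n (k + 1) = 1 ⬝ᵥ (compMatrix n ^ k *ᵥ 1) :=
  (Fintype.card_congr (Equiv.subtypeEquivRight fun _ ↦ Iff.rfl)).trans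
    (card_isTupleChain (fun i j : Fin n ↦ rho n (i + 1) (j + 1)) k)

theorem compMatrix_six_pow_four_mulVec_one :
    compMatrix 6 ^ 4 *ᵥ 1 + 1 = 3 • (compMatrix 6 ^ 2 *ᵥ 1) := by
  decide

/-- For `n = 6` and every `k ≥ 1`, the number of meaningful compositions
satisfies the recurrence f(k+4) = 3·f(k+2) − f(k). -/
theorem numComp_six_recurrence (k : ℕ) (hk : 1 ≤ k) :
    (numComp 6 (k + 4) : ℤ) = 3 * numComp 6 (k + 2) - numComp 6 k := by
  obtain ⟨m, rfl⟩ := Nat.exists_eq_add_of_le' hk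
  have recurrence_nat : numComp 6 (m + 1 + 4) + numComp 6 (m + 1) = 3 * numComp 6 (m + 1 + 2) := by
    simp only [numComp_succ_s8]
    exact dotProduct_pow_mulVec_recurrence compMatrix_six_pow_four_mulVec_one 1 m
  omega
end
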